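/- arXiv:1903.10460 — 5 statements merged into one kernel-verified Lean document; each statement's English description precedes it below -/
import Mathlib

section
/- Let k be a field, S = k[x,y] the polynomial ring, and R = k + xS the subalgebra generated by x, xy, xy², .... Then R is not a noetherian ring. -/
/-!
Every element of `R` has the form `c + x s` with `c ∈ k`, so multiplying `x u ∈ R` by it gives
`c x u` plus an element of `x²S`, which has no coefficients at the monomials `x yᵐ`. Hence, for
each `N`, the elements of `xS ∩ R` whose coefficients at the monomials `x yᵐ` with `m ≥ N` all
vanish form an ideal `I_N` of `R`, and `x y^N ∈ I_{N+1} \ I_N` makes `I_0 ⊂ I_1 ⊂ ⋯` a strictly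
increasing chain of ideals.
-/

open MvPolynomial

namespace MvPolynomial

variable {σ R : Type*} [CommRing R] {i j : σ}

theorem X_dvd_sub_C_constantCoeff_of_mem_adjoin {s : Set (MvPolynomial σ R)}
    (hs : ∀ f ∈ s, X i ∣ f) {r : MvPolynomial σ R} (hr : r ∈ Algebra.adjoin R s) :
    X i ∣ r - C (constantCoeff r) := by
  induction hr using Algebra.adjoin_induction with
  | mem f hf =>
    obtain ⟨g, rfl⟩ := hs f hf
    simp
  | algebraMap a => simp [algebraMap_eq]
  | add p q _ _ hp hq =>
    rw [map_add, map_add, add_sub_add_comm]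
    exact dvd_add hp hq
  | mul p q _ _ hp hq =>
    have h : p * q - C (constantCoeff (p * q)) =
        p * (q - C (constantCoeff q)) + C (constantCoeff q) * (p - C (constantCoeff p)) := by
      rw [map_mul, map_mul]; ring
    rw [h]
    exact dvd_add (dvd_mul_of_dvd_right hq p) (dvd_mul_of_dvd_right hp _)

theorem coeff_X_sq_mul_eq_zero {d : σ →₀ ℕ} (hd : d i < 2) (p : MvPolynomial σ R) :
    coeff d (X i ^ 2 * p) = 0 := by
  rw [X_pow_eq_monomial, coeff_monomial_mul', if_neg]
  simpa [Finsupp.single_le_iff] using hd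

theorem X_mul_X_pow_eq_monomial (N : ℕ) :
    (X i * X j ^ N : MvPolynomial σ R) =
      monomial (Finsupp.single i 1 + Finsupp.single j N) 1 := by
  rw [X_pow_eq_monomial, X, monomial_mul, one_mul]

section tailIdeal

variable {A : Subalgebra R (MvPolynomial σ R)}

/-- The ideal `I_N` of the proof idea, for `x = X i` and `y = X j`. -/
def tailIdeal (i j : σ) (hA : ∀ r ∈ A, X i ∣ r - C (constantCoeff r)) (N : ℕ) : Ideal A where
  carrier := {r | X i ∣ (r : MvPolynomial σ R) ∧
    ∀ d : σ →₀ ℕ, d i = 1 → N ≤ d j → coeff d (r : MvPolynomial σ R) = 0}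
  zero_mem' := by simp
  add_mem' := by
    rintro r r' ⟨hr, hrc⟩ ⟨hr', hrc'⟩
    exact ⟨dvd_add hr hr', fun d hdi hdj ↦ by simp [hrc d hdi hdj, hrc' d hdi hdj]⟩
  smul_mem' := by
    rintro a r ⟨⟨u, hu⟩, hrc⟩
    obtain ⟨s, hs⟩ := hA a a.2
    set c := constantCoeff (a : MvPolynomial σ R)
    have ha : (a : MvPolynomial σ R) = C c + X i * s := by
      rw [← hs]; ring
    have hprod : ((a • r : A) : MvPolynomial σ R) =
        C c * (r : MvPolynomial σ R) + X i ^ 2 * (s * u) := by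
      rw [smul_eq_mul, Subalgebra.coe_mul, ha, add_mul, hu]; ring
    refine ⟨dvd_mul_of_dvd_right ⟨u, hu⟩ _, fun d hdi hdj ↦ ?_⟩
    rw [hprod, coeff_add, coeff_C_mul, hrc d hdi hdj, coeff_X_sq_mul_eq_zero (by omega)]
    simp

theorem tailIdeal_mono (hA : ∀ r ∈ A, X i ∣ r - C (constantCoeff r)) :
    Monotone (tailIdeal i j hA) :=
  fun _ _ hNM _ ⟨hr, hrc⟩ ↦ ⟨hr, fun d hdi hdj ↦ hrc d hdi (hNM.trans hdj)⟩

theorem X_mul_X_pow_mem_tailIdeal_succ (hA : ∀ r ∈ A, X i ∣ r - C (constantCoeff r))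
    (hij : i ≠ j) {N : ℕ} (hN : X i * X j ^ N ∈ A) :
    ⟨X i * X j ^ N, hN⟩ ∈ tailIdeal i j hA (N + 1) := by
  classical
  refine ⟨dvd_mul_right _ _, fun d _ hdj ↦ ?_⟩
  rw [Subtype.coe_mk, X_mul_X_pow_eq_monomial, coeff_monomial, if_neg]
  rintro rfl
  simp [hij.symm] at hdj

theorem X_mul_X_pow_notMem_tailIdeal [Nontrivial R]
    (hA : ∀ r ∈ A, X i ∣ r - C (constantCoeff r)) (hij : i ≠ j) {N : ℕ}
    (hN : X i * X j ^ N ∈ A) :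
    ⟨X i * X j ^ N, hN⟩ ∉ tailIdeal i j hA N := by
  classical
  rintro ⟨-, hc⟩
  have := hc (Finsupp.single i 1 + Finsupp.single j N) (by simp [hij.symm]) (by simp [hij])
  rw [Subtype.coe_mk, X_mul_X_pow_eq_monomial, coeff_monomial, if_pos rfl] at this
  exact one_ne_zero this

theorem strictMono_tailIdeal [Nontrivial R] (hA : ∀ r ∈ A, X i ∣ r - C (constantCoeff r))
    (hij : i ≠ j) (hxy : ∀ n : ℕ, X i * X j ^ n ∈ A) :
    StrictMono (tailIdeal i j hA) :=
  strictMono_nat_of_lt_succ fun N ↦ SetLike.lt_iff_le_and_exists.2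
    ⟨tailIdeal_mono hA N.le_succ, _, X_mul_X_pow_mem_tailIdeal_succ hA hij (hxy N),
      X_mul_X_pow_notMem_tailIdeal hA hij (hxy N)⟩

end tailIdeal

theorem not_isNoetherianRing_of_X_mul_X_pow_mem [Nontrivial R]
    {A : Subalgebra R (MvPolynomial σ R)} (hA : ∀ r ∈ A, X i ∣ r - C (constantCoeff r))
    (hij : i ≠ j) (hxy : ∀ n : ℕ, X i * X j ^ n ∈ A) : ¬ IsNoetherianRing A :=
  fun _ ↦ not_strictMono_of_wellFoundedGT _ (strictMono_tailIdeal hA hij hxy)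

end MvPolynomial

/-- For a field `k`, the subalgebra `R = k + xS = k[x, xy, xy², ...]`
of `S = k[x,y]` is not a noetherian ring. -/
theorem stmt_0 (k : Type*) [Field k] :
    ¬ IsNoetherianRing
      (Algebra.adjoin k {f : MvPolynomial (Fin 2) k | ∃ n : ℕ, f = X 0 * X 1 ^ n}) :=
  not_isNoetherianRing_of_X_mul_X_pow_mem
    (fun _ hr ↦ X_dvd_sub_C_constantCoeff_of_mem_adjoin
      (by rintro _ ⟨n, rfl⟩; exact dvd_mul_right _ _) hr)
    (by decide) (fun n ↦ Algebra.subset_adjoin ⟨n, rfl⟩)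
end

section
/- Let k be a field, S = k[x,y], and R = k + xS. For any maximal ideal n of S not containing x, the localization of R at n ∩ R equals the localization S_n (as subrings of Frac S). -/
open MvPolynomial

/-- Localization of a subset `A` of a field at (the complement of) a subset `P`,
as a set of fractions `a / b` with `a, b ∈ A`, `b ∉ P`. -/
def locSet {F : Type*} [DivisionRing F] (A P : Set F) : Set F :=
  {x | ∃ a ∈ A, ∃ b ∈ A, b ∉ P ∧ x = a / b}

/-! `R` contains `x S`, so a fraction `s / t` with `t ∉ n` equals `(x s) / (x t)`, whose numerator
and denominator lie in `R`, and `x t ∉ n` because `n` is prime and `x ∉ n`. -/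

theorem locSet_inter_eq_of_mul_mem {F : Type*} [Field F] {A B P : Set F} (hAB : A ⊆ B)
    {u : F} (hu : u ≠ 0) (huA : ∀ b ∈ B, u * b ∈ A) (huP : ∀ b ∈ B, b ∉ P → u * b ∉ P) :
    locSet A (P ∩ A) = locSet B P := by
  ext z
  constructor
  · rintro ⟨a, ha, b, hb, hbP, rfl⟩
    exact ⟨a, hAB ha, b, hAB hb, fun h => hbP ⟨h, hb⟩, rfl⟩
  · rintro ⟨a, ha, b, hb, hbP, rfl⟩
    refine ⟨u * a, huA a ha, u * b, huA b hb, fun h => huP b hb hbP h.1, ?_⟩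
    rw [mul_div_mul_left _ _ hu]

theorem locSet_image_eq_of_mul_mem {S F : Type*} [CommRing S] [Field F] {φ : S →+* F}
    (hφ : Function.Injective φ) {R : Set S} {p : Ideal S} (hp : p.IsPrime) {u : S}
    (hu : u ∉ p) (huR : ∀ s, u * s ∈ R) :
    locSet (φ '' R) (φ '' (p ∩ R)) = locSet (Set.range φ) (φ '' p) := by
  rw [Set.image_inter hφ]
  refine locSet_inter_eq_of_mul_mem (Set.image_subset_range φ R) (u := φ u) ?_ ?_ ?_
  · rw [map_ne_zero_iff φ hφ]
    exact fun h => hu (h ▸ p.zero_mem)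
  · rintro _ ⟨s, rfl⟩
    exact ⟨u * s, huR s, map_mul φ u s⟩
  · rintro _ ⟨t, rfl⟩ ht ⟨v, hv, hvt⟩
    rw [← map_mul, hφ.eq_iff] at hvt
    exact hp.mul_notMem hu (fun h => ht ⟨t, h, rfl⟩) (hvt ▸ hv)

theorem X_zero_mul_mem_adjoin {k : Type*} [CommSemiring k] (f : MvPolynomial (Fin 2) k) :
    X 0 * f ∈ Algebra.adjoin k {f : MvPolynomial (Fin 2) k | ∃ m : ℕ, f = X 0 * X 1 ^ m} := by
  set R := Algebra.adjoin k {f : MvPolynomial (Fin 2) k | ∃ m : ℕ, f = X 0 * X 1 ^ m}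
  have hgen : ∀ m : ℕ, (X 0 * X 1 ^ m : MvPolynomial (Fin 2) k) ∈ R :=
    fun m => Algebra.subset_adjoin ⟨m, rfl⟩
  induction f using MvPolynomial.induction_on' with
  | monomial u c =>
    have heq : (X 0 : MvPolynomial (Fin 2) k) * monomial u c =
        C c * (X 0 * X 1 ^ 0) ^ u 0 * (X 0 * X 1 ^ u 1) := by
      rw [monomial_eq, Finsupp.prod_fintype _ _ (by simp), Fin.prod_univ_two]
      ring
    rw [heq]
    exact R.mul_mem (R.mul_mem (R.algebraMap_mem c) (R.pow_mem (hgen 0) _)) (hgen _)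
  | add p q hp hq => rw [mul_add]; exact R.add_mem hp hq

theorem stmt_2_general (k : Type*) [Field k]
    (n : Ideal (MvPolynomial (Fin 2) k)) (hn : n.IsMaximal) (hx : X 0 ∉ n)
    (R : Subalgebra k (MvPolynomial (Fin 2) k))
    (hR : R = Algebra.adjoin k {f : MvPolynomial (Fin 2) k | ∃ m : ℕ, f = X 0 * X 1 ^ m})
    (φ : MvPolynomial (Fin 2) k → FractionRing (MvPolynomial (Fin 2) k))
    (hφ : φ = algebraMap (MvPolynomial (Fin 2) k) (FractionRing (MvPolynomial (Fin 2) k))) :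
    locSet (φ '' (R : Set (MvPolynomial (Fin 2) k)))
        (φ '' ((n : Set (MvPolynomial (Fin 2) k)) ∩ (R : Set (MvPolynomial (Fin 2) k))))
      = locSet (Set.range φ) (φ '' (n : Set (MvPolynomial (Fin 2) k))) := by
  subst hR hφ
  exact locSet_image_eq_of_mul_mem (IsFractionRing.injective _ _) hn.isPrime hx
    X_zero_mul_mem_adjoin

/-- Let `k` be an algebraically closed field, `S = k[x,y]`, `R = k + xS`.
For any maximal ideal `n` of `S` with `x ∉ n`, the localization `R_{n ∩ R}` equals `S_n`
inside `Frac S`. -/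
theorem stmt_2 (k : Type*) [Field k] [IsAlgClosed k]
    (n : Ideal (MvPolynomial (Fin 2) k)) (hn : n.IsMaximal) (hx : X 0 ∉ n)
    (R : Subalgebra k (MvPolynomial (Fin 2) k))
    (hR : R = Algebra.adjoin k {f : MvPolynomial (Fin 2) k | ∃ m : ℕ, f = X 0 * X 1 ^ m})
    (φ : MvPolynomial (Fin 2) k → FractionRing (MvPolynomial (Fin 2) k))
    (hφ : φ = algebraMap (MvPolynomial (Fin 2) k) (FractionRing (MvPolynomial (Fin 2) k))) :
    locSet (φ '' (R : Set (MvPolynomial (Fin 2) k)))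
        (φ '' ((n : Set (MvPolynomial (Fin 2) k)) ∩ (R : Set (MvPolynomial (Fin 2) k))))
      = locSet (Set.range φ) (φ '' (n : Set (MvPolynomial (Fin 2) k))) :=
  stmt_2_general k n hn hx R hR φ hφ
end

section
/- Let k be a field, S = k[x,y], and R = k + xS. Let m₀ = xS, which is a maximal ideal of R. Then the localization R_{m₀} is not noetherian. -/
open MvPolynomial

/-! Modulo `x²`, an element of `R ⊆ k + xS` acts on `xS` through its constant term, so the
`k`-subspace `span {x yᵐ | m ≤ n} + x²S` is stable under multiplication by `R`, and comparing
coefficients of `x yⁿ⁺¹` shows that it does not contain `x yⁿ⁺¹`. If `R_{m₀}` were noetherian, the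
chain of ideals generated by `x, xy, …, x yⁿ` would become stationary in `R_{m₀}`, giving
`s x yⁿ⁺¹` in that subspace for some `s ∉ m₀`, i.e. with `s(0) ≠ 0`; subtracting
`(s - s(0)) x yⁿ⁺¹ ∈ x²S` then puts `x yⁿ⁺¹` itself in it. -/

theorem IsLocalization.exists_mul_mem_span_image_Iic {R : Type*} [CommRing R] (M : Submonoid R)
    (L : Type*) [CommRing L] [Algebra R L] [IsLocalization M L] [IsNoetherianRing L]
    (g : ℕ → R) : ∃ n, ∃ s ∈ M, s * g (n + 1) ∈ Ideal.span (g '' Set.Iic n) := by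
  let J : ℕ →o Ideal L := ⟨fun n => (Ideal.span (g '' Set.Iic n)).map (algebraMap R L),
    fun _ _ h => Ideal.map_mono (Ideal.span_mono (Set.image_mono (Set.Iic_subset_Iic.2 h)))⟩
  obtain ⟨n, hn⟩ := monotone_stabilizes_iff_noetherian.mpr inferInstance J
  have hg : algebraMap R L (g (n + 1)) ∈ J (n + 1) :=
    Ideal.mem_map_of_mem _ (Ideal.subset_span ⟨n + 1, Set.mem_Iic.2 le_rfl, rfl⟩)
  rw [← hn (n + 1) n.le_succ] at hg
  exact ⟨n, (IsLocalization.algebraMap_mem_map_algebraMap_iff M L _ _).1 hg⟩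

namespace MvPolynomial

variable {σ : Type*} (k : Type*) [Field k]

def constAddXMul (i : σ) : Subalgebra k (MvPolynomial σ k) where
  carrier := {f | X i ∣ f - C (constantCoeff f)}
  mul_mem' {f g} hf hg := by
    have : f * g - C (constantCoeff (f * g)) =
        (f - C (constantCoeff f)) * g + C (constantCoeff f) * (g - C (constantCoeff g)) := by
      simp only [map_mul]; ring
    show X i ∣ _
    rw [this]
    exact dvd_add (dvd_mul_of_dvd_left hf _) (dvd_mul_of_dvd_right hg _)
  add_mem' {f g} hf hg := by
    show X i ∣ _
    rw [map_add, map_add, add_sub_add_comm]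
    exact dvd_add hf hg
  algebraMap_mem' c := by simp

variable {k}

theorem mem_constAddXMul {i : σ} {f : MvPolynomial σ k} :
    f ∈ constAddXMul k i ↔ X i ∣ f - C (constantCoeff f) := Iff.rfl

theorem X_dvd_iff_constantCoeff_eq_zero {i : σ} {f : MvPolynomial σ k}
    (hf : f ∈ constAddXMul k i) : X i ∣ f ↔ constantCoeff f = 0 := by
  refine ⟨fun ⟨g, hg⟩ => by simp [hg], fun h => ?_⟩
  simpa [h] using mem_constAddXMul.1 hf

theorem isMaximal_comap_span_X {i : σ} {R : Subalgebra k (MvPolynomial σ k)}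
    (hR : R ≤ constAddXMul k i) : ((Ideal.span {X i}).comap R.val).IsMaximal := by
  have : (Ideal.span {X i}).comap R.val = RingHom.ker (constantCoeff.comp R.val.toRingHom) := by
    ext r
    rw [Ideal.mem_comap, Ideal.mem_span_singleton, RingHom.mem_ker]
    exact X_dvd_iff_constantCoeff_eq_zero (hR r.2)
  rw [this]
  exact RingHom.ker_isMaximal_of_surjective _ fun c => ⟨algebraMap k R c, by simp⟩

variable (k) in
noncomputable def truncatedSpan (i j : σ) (n : ℕ) : Submodule k (MvPolynomial σ k) :=
  Submodule.span k ((fun m => X i * X j ^ m) '' Set.Iic n) ⊔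
    (Ideal.span {X i} ^ 2).restrictScalars k

variable {i j : σ} {n : ℕ}

theorem truncatedSpan_le_span_X :
    truncatedSpan k i j n ≤ (Ideal.span {X i}).restrictScalars k := by
  refine sup_le (Submodule.span_le.2 ?_) (Ideal.pow_le_self two_ne_zero)
  rintro _ ⟨m, -, rfl⟩
  exact Ideal.mem_span_singleton.2 (dvd_mul_right _ _)

theorem mul_mem_span_X_sq {r v : MvPolynomial σ k} (hr : r ∈ constAddXMul k i)
    (hv : v ∈ Ideal.span {X i}) : (r - C (constantCoeff r)) * v ∈ Ideal.span {X i} ^ 2 := by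
  rw [pow_two]
  exact Ideal.mul_mem_mul (Ideal.mem_span_singleton.2 hr) hv

theorem mul_mem_truncatedSpan {r v : MvPolynomial σ k} (hr : r ∈ constAddXMul k i)
    (hv : v ∈ truncatedSpan k i j n) : r * v ∈ truncatedSpan k i j n := by
  have hrv : r * v = constantCoeff r • v + (r - C (constantCoeff r)) * v := by
    rw [smul_eq_C_mul]; ring
  rw [hrv]
  exact add_mem (Submodule.smul_mem _ _ hv)
    (Submodule.mem_sup_right (mul_mem_span_X_sq hr (truncatedSpan_le_span_X hv)))

theorem mem_truncatedSpan_of_mul_mem {s v : MvPolynomial σ k} (hs : s ∈ constAddXMul k i)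
    (hs₀ : constantCoeff s ≠ 0) (hv : v ∈ Ideal.span {X i})
    (hsv : s * v ∈ truncatedSpan k i j n) : v ∈ truncatedSpan k i j n := by
  have hcv : constantCoeff s • v = s * v - (s - C (constantCoeff s)) * v := by
    rw [smul_eq_C_mul]; ring
  rw [← inv_smul_smul₀ hs₀ v, hcv]
  exact Submodule.smul_mem _ _
    (sub_mem hsv (Submodule.mem_sup_right (mul_mem_span_X_sq hs hv)))

theorem coeff_eq_zero_of_mem_truncatedSpan (hij : i ≠ j) {f : MvPolynomial σ k}
    (hf : f ∈ truncatedSpan k i j n) :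
    coeff (Finsupp.single i 1 + Finsupp.single j (n + 1)) f = 0 := by
  suffices truncatedSpan k i j n ≤
      LinearMap.ker (lcoeff k (Finsupp.single i 1 + Finsupp.single j (n + 1))) from this hf
  refine sup_le (Submodule.span_le.2 ?_) ?_
  · rintro _ ⟨m, hm, rfl⟩
    classical
    change coeff _ (X i * X j ^ m) = 0
    rw [X_pow_eq_monomial, X, monomial_mul, one_mul, coeff_monomial, if_neg]
    intro h
    have := Finsupp.single_injective j (add_right_injective _ h)
    exact absurd hm (by simp [this])
  · intro f hf
    rw [Submodule.restrictScalars_mem, Ideal.span_singleton_pow, Ideal.mem_span_singleton] at hf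
    obtain ⟨g, rfl⟩ := hf
    simp [X_pow_eq_monomial, coeff_monomial_mul', hij]

variable {R : Subalgebra k (MvPolynomial σ k)}

theorem val_mem_truncatedSpan_of_mem_span (hR : R ≤ constAddXMul k i) {g : ℕ → R}
    (hg : ∀ m, (g m : MvPolynomial σ k) = X i * X j ^ m) {f : R}
    (hf : f ∈ Ideal.span (g '' Set.Iic n)) : (f : MvPolynomial σ k) ∈ truncatedSpan k i j n := by
  induction hf using Submodule.span_induction with
  | mem _ hf =>
    obtain ⟨m, hm, rfl⟩ := hf
    exact Submodule.mem_sup_left (Submodule.subset_span ⟨m, hm, (hg m).symm⟩)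
  | zero => exact zero_mem _
  | add _ _ _ _ hf hf' => exact add_mem hf hf'
  | smul r _ _ hf => exact mul_mem_truncatedSpan (hR r.2) hf

theorem not_isNoetherianRing_of_isLocalization_atPrime (hij : i ≠ j) (hR : R ≤ constAddXMul k i)
    (hgen : ∀ m, X i * X j ^ m ∈ R) [((Ideal.span {X i}).comap R.val).IsPrime]
    (L : Type*) [CommRing L] [Algebra R L]
    [IsLocalization.AtPrime L ((Ideal.span {X i}).comap R.val)] : ¬ IsNoetherianRing L := by
  intro _
  obtain ⟨n, s, hs, hsg⟩ := IsLocalization.exists_mul_mem_span_image_Iic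
    ((Ideal.span {X i}).comap R.val).primeCompl L (fun m => ⟨X i * X j ^ m, hgen m⟩)
  have hs₀ : constantCoeff (s : MvPolynomial σ k) ≠ 0 := fun h =>
    hs (Ideal.mem_span_singleton.2 ((X_dvd_iff_constantCoeff_eq_zero (hR s.2)).2 h))
  have hx : X i * X j ^ (n + 1) ∈ truncatedSpan k i j n :=
    mem_truncatedSpan_of_mul_mem (hR s.2) hs₀ (Ideal.mem_span_singleton.2 (dvd_mul_right _ _))
      (val_mem_truncatedSpan_of_mem_span hR (fun _ => rfl) hsg)
  have := coeff_eq_zero_of_mem_truncatedSpan hij hx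
  classical
  rw [X_pow_eq_monomial, X, monomial_mul, one_mul, coeff_monomial, if_pos rfl] at this
  exact one_ne_zero this

end MvPolynomial

/-- For `S = k[x,y]`, `R = k + xS`, and `m₀ = xS` (the ideal of `R` of
elements lying in `xS`), `m₀` is a maximal ideal of `R`, and the localization `R_{m₀}`
is not noetherian. -/
theorem stmt_3 (k : Type*) [Field k]
    (R : Subalgebra k (MvPolynomial (Fin 2) k))
    (hR : R = Algebra.adjoin k {f : MvPolynomial (Fin 2) k | ∃ m : ℕ, f = X 0 * X 1 ^ m})
    (m₀ : Ideal R)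
    (hm₀ : m₀ = Ideal.comap R.val (Ideal.span {(X 0 : MvPolynomial (Fin 2) k)})) :
    m₀.IsMaximal ∧
      ∀ (hp : m₀.IsPrime), ¬ IsNoetherianRing (Localization (@Ideal.primeCompl _ _ m₀ hp)) := by
  subst hm₀
  have hT : R ≤ constAddXMul k 0 :=
    hR ▸ Algebra.adjoin_le fun _ ⟨m, hm⟩ => mem_constAddXMul.2 (by simp [hm])
  refine ⟨isMaximal_comap_span_X hT, fun _ => ?_⟩
  exact not_isNoetherianRing_of_isLocalization_atPrime (j := 1) (by decide) hT
    (fun m => hR ▸ Algebra.subset_adjoin ⟨m, rfl⟩) (Localization.AtPrime (Ideal.comap R.val _))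
end

section
/- Let k be a field, S = k[x,y], and R = k + xS. Then the Krull dimension of R equals 2. -/
/-!
The element `x` lies in the conductor of `R = k + xS` in `S = k[x,y]`, i.e. `xS ⊆ R`. Hence a
prime `p` of `R` with `x ∉ p` is the contraction of the prime `{s | xs ∈ p}` of `S`, and this
correspondence is strictly monotone. A prime containing `x` equals `m = xS`, which is maximal.
So in a chain `p₀ < p₁ < p₂` of primes of `R`, either `p₂ = m`, or `p₂` is the contraction of a
prime of `S` at the top of a chain of length two; since `dim S = 2` that prime is maximal, and by
the Nullstellensatz its contraction `p₂` is maximal too. Thus `dim R ≤ 2`, and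
`0 < R ∩ yS < m` shows `dim R ≥ 2`.
-/

open MvPolynomial

namespace Order

variable {α : Type*} [Preorder α]

lemma two_le_krullDim_of_lt_of_lt {a b c : α} (hab : a < b) (hbc : b < c) :
    2 ≤ krullDim α :=
  LTSeries.length_le_krullDim (((RelSeries.singleton _ a : LTSeries α).snoc b hab).snoc c hbc)

lemma krullDim_le_two_iff : krullDim α ≤ 2 ↔ ∀ a b c : α, a < b → b < c → IsMax c := by
  constructor
  · intro h a b c hab hbc d hcd
    by_contra hdc
    have hlen := LTSeries.length_le_krullDim ((((RelSeries.singleton _ a : LTSeries α).snoc b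
      hab).snoc c hbc).snoc d (lt_of_le_not_ge hcd hdc))
    have : ((3 : ℕ) : WithBot ℕ∞) ≤ 2 := hlen.trans h
    norm_num at this
  · intro h
    rw [← Nat.cast_ofNat, ← ENat.WithBot.lt_add_one_iff, ← Nat.cast_add_one, krullDim_lt_coe_iff]
    intro l
    by_contra! hl
    let a (i : Fin 4) : α := l ⟨i, by omega⟩
    have ha : StrictMono a := fun i j hij => l.strictMono (Fin.mk_lt_mk.mpr hij)
    exact (h (a 0) (a 1) (a 2) (ha (by decide)) (ha (by decide))).not_lt
      (ha (show (2 : Fin 4) < 3 by decide))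

end Order

theorem Ideal.IsMaximal.comap_of_finiteType {k A B : Type*} [Field k] [CommRing A] [CommRing B]
    [Algebra k A] [Algebra k B] [Algebra.FiniteType k B] (f : A →ₐ[k] B) (M : Ideal B)
    [M.IsMaximal] : (M.comap f).IsMaximal := by
  let := Ideal.Quotient.field M
  have : Module.Finite k (B ⧸ M) := finite_of_finite_type_of_isJacobsonRing k (B ⧸ M)
  have : Algebra.IsIntegral k (A ⧸ M.comap f) :=
    Algebra.IsIntegral.of_injective (Ideal.quotientMapₐ M f le_rfl) Ideal.quotientMap_injective
  exact Ideal.Quotient.maximal_of_isField _ (isField_of_isIntegral_of_isField' (Field.toIsField k))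

section Conductor

variable {k S : Type*} [CommSemiring k] [CommRing S] [Algebra k S] {R : Subalgebra k S} {x : R}

/-- For `x` in the conductor of `R ⊆ S`, the ideal `{s | x t s ∈ p for all t}` of `S`. The
quantifier over `t` makes it an ideal for every `p`; for a prime `p ∌ x` it is `{s | x s ∈ p}`
(`mem_iff`). -/
def Subalgebra.conductorLift (hx : ∀ s, (x : S) * s ∈ R) (p : Ideal R) : Ideal S where
  carrier := {s | ∀ t, (⟨x * (t * s), hx _⟩ : R) ∈ p}
  zero_mem' t := by
    convert p.zero_mem
    simp
  add_mem' {a b} ha hb t := by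
    convert p.add_mem (ha t) (hb t) using 1
    ext1
    simp only [mul_add, AddMemClass.mk_add_mk]
  smul_mem' c s hs t := by simpa only [smul_eq_mul, mul_assoc] using hs (t * c)

namespace Subalgebra.conductorLift

variable (hx : ∀ s, (x : S) * s ∈ R) {p : Ideal R} [p.IsPrime]

theorem mul_mk_x_mul (s t : S) :
    x * ⟨x * (s * t), hx _⟩ = ⟨x * s, hx s⟩ * ⟨x * t, hx t⟩ := by
  ext1
  simp only [MulMemClass.coe_mul]
  ring

theorem mem_iff (hxp : x ∉ p) (s : S) :
    s ∈ conductorLift hx p ↔ (⟨x * s, hx s⟩ : R) ∈ p := by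
  refine ⟨fun h => by simpa using h 1, fun h t => ?_⟩
  have := mul_mk_x_mul hx t s ▸ p.mul_mem_left ⟨x * t, hx t⟩ h
  exact (Ideal.IsPrime.mem_or_mem ‹_› this).resolve_left hxp

theorem isPrime (hxp : x ∉ p) : (conductorLift hx p).IsPrime := by
  refine Ideal.isPrime_iff.mpr ⟨fun htop => hxp ?_, fun {s t} hst => ?_⟩
  · simpa using (mem_iff hx hxp 1).mp (htop ▸ Submodule.mem_top)
  · simp only [mem_iff hx hxp] at hst ⊢
    exact Ideal.IsPrime.mem_or_mem ‹_› (mul_mk_x_mul hx s t ▸ p.mul_mem_left x hst)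

theorem comap_val (hxp : x ∉ p) : (conductorLift hx p).comap R.val = p := by
  ext r
  rw [Ideal.mem_comap, mem_iff hx hxp]
  exact ⟨fun h => (Ideal.IsPrime.mem_or_mem ‹_› h).resolve_left hxp, p.mul_mem_left x⟩

theorem lt_of_lt {q : Ideal R} [q.IsPrime] (hxq : x ∉ q) (h : p < q) :
    conductorLift hx p < conductorLift hx q := by
  have hxp : x ∉ p := fun hxp => hxq (h.le hxp)
  refine lt_of_le_of_ne (fun s hs t => h.le (hs t)) fun e => h.ne ?_
  rw [← comap_val hx hxp, e, comap_val hx hxq]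

end Subalgebra.conductorLift

end Conductor

namespace KPlusXS

variable (k : Type*) [Field k]

noncomputable abbrev R : Subalgebra k (MvPolynomial (Fin 2) k) :=
  Algebra.adjoin k {f : MvPolynomial (Fin 2) k | ∃ n : ℕ, f = X 0 * X 1 ^ n}

noncomputable def x : R k := ⟨X 0, Algebra.subset_adjoin ⟨0, by simp⟩⟩

noncomputable def maxIdeal : Ideal (R k) := RingHom.ker (constantCoeff.comp (R k).val.toRingHom)

noncomputable def evalX1Zero : R k →ₐ[k] Polynomial k :=
  (aeval (![Polynomial.X, 0] : Fin 2 → Polynomial k)).comp (R k).val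

variable {k}

theorem x_mul_mem (s : MvPolynomial (Fin 2) k) : ↑(x k) * s ∈ R k := by
  induction s using MvPolynomial.induction_on' with
  | add p q hp hq => rw [mul_add]; exact add_mem hp hq
  | monomial m a =>
    have : X 0 * monomial m a = C a * X 0 ^ m 0 * (X 0 * X 1 ^ m 1) := by
      rw [monomial_eq, Finsupp.prod_fintype _ _ (fun i => pow_zero _), Fin.prod_univ_two]
      ring
    rw [x, this]
    exact mul_mem (mul_mem ((R k).algebraMap_mem a) (pow_mem (x k).2 _))
      (Algebra.subset_adjoin ⟨m 1, rfl⟩)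

theorem exists_eq_C_add_X0_mul {r : MvPolynomial (Fin 2) k} (hr : r ∈ R k) :
    ∃ c s, r = C c + X 0 * s := by
  induction hr using Algebra.adjoin_induction with
  | mem f hf => obtain ⟨n, rfl⟩ := hf; exact ⟨0, X 1 ^ n, by simp⟩
  | algebraMap c => exact ⟨c, 0, by simp [MvPolynomial.algebraMap_eq]⟩
  | add f g _ _ ihf ihg =>
    obtain ⟨c₁, s₁, rfl⟩ := ihf
    obtain ⟨c₂, s₂, rfl⟩ := ihg
    exact ⟨c₁ + c₂, s₁ + s₂, by rw [map_add]; ring⟩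
  | mul f g _ _ ihf ihg =>
    obtain ⟨c₁, s₁, rfl⟩ := ihf
    obtain ⟨c₂, s₂, rfl⟩ := ihg
    exact ⟨c₁ * c₂, C c₁ * s₂ + C c₂ * s₁ + X 0 * s₁ * s₂, by rw [map_mul]; ring⟩

theorem maxIdeal_isMaximal : (maxIdeal k).IsMaximal :=
  RingHom.ker_isMaximal_of_surjective _ fun c => ⟨algebraMap k (R k) c, by simp⟩

theorem maxIdeal_le_of_x_mem {p : Ideal (R k)} [p.IsPrime] (hx : x k ∈ p) : maxIdeal k ≤ p := by
  intro r hr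
  obtain ⟨c, s, hcs⟩ := exists_eq_C_add_X0_mul r.2
  obtain rfl : c = 0 := by simpa [maxIdeal, hcs] using hr
  have : r * r = x k * ⟨X 0 * (s * s), x_mul_mem _⟩ := by
    ext1
    simp only [MulMemClass.coe_mul, hcs, x, map_zero, zero_add]
    ring
  exact (Ideal.IsPrime.mem_or_mem ‹_› (this ▸ p.mul_mem_right _ hx)).elim id id

theorem isMaximal_of_x_mem {p : Ideal (R k)} [p.IsPrime] (hx : x k ∈ p) : p.IsMaximal :=
  maxIdeal_isMaximal.eq_of_le Ideal.IsPrime.ne_top' (maxIdeal_le_of_x_mem hx) ▸ maxIdeal_isMaximal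

theorem isMaximal_of_lt_of_lt {p₀ p₁ p₂ : Ideal (R k)} [p₀.IsPrime] [p₁.IsPrime] [p₂.IsPrime]
    (h₀₁ : p₀ < p₁) (h₁₂ : p₁ < p₂) : p₂.IsMaximal := by
  by_cases hx₂ : x k ∈ p₂
  · exact isMaximal_of_x_mem hx₂
  have hx₁ : x k ∉ p₁ := fun h => hx₂ (h₁₂.le h)
  have hx₀ : x k ∉ p₀ := fun h => hx₁ (h₀₁.le h)
  have hS : ringKrullDim (MvPolynomial (Fin 2) k) ≤ 2 := by simp
  open Subalgebra.conductorLift in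
  have : (Subalgebra.conductorLift x_mul_mem p₂).IsMaximal :=
    PrimeSpectrum.isMax_iff.mp <| Order.krullDim_le_two_iff.mp hS
      ⟨_, isPrime x_mul_mem hx₀⟩ ⟨_, isPrime x_mul_mem hx₁⟩ ⟨_, isPrime x_mul_mem hx₂⟩
      (lt_of_lt x_mul_mem hx₁ h₀₁) (lt_of_lt x_mul_mem hx₂ h₁₂)
  rw [← Subalgebra.conductorLift.comap_val x_mul_mem hx₂]
  exact Ideal.IsMaximal.comap_of_finiteType _ _

theorem ringKrullDim_le_two : ringKrullDim (R k) ≤ 2 :=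
  Order.krullDim_le_two_iff.mpr fun _ _ p hab hbc =>
    PrimeSpectrum.isMax_iff.mpr (isMaximal_of_lt_of_lt (p₂ := p.asIdeal) hab hbc)

theorem two_le_ringKrullDim : 2 ≤ ringKrullDim (R k) := by
  let P₁ := RingHom.ker (evalX1Zero k)
  let P₂ := RingHom.ker ((Polynomial.aeval (0 : k)).comp (evalX1Zero k))
  have hx : evalX1Zero k (x k) = Polynomial.X := by simp [evalX1Zero, x]
  have h₀₁ : ⊥ < P₁ := by
    refine bot_lt_iff_ne_bot.mpr <| (Submodule.ne_bot_iff _).mpr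
      ⟨⟨X 0 * X 1, x_mul_mem _⟩, by simp [P₁, evalX1Zero], fun h => ?_⟩
    exact mul_ne_zero (X_ne_zero 0) (X_ne_zero 1) (congrArg Subtype.val h)
  have h₁₂ : P₁ < P₂ := by
    refine SetLike.lt_iff_le_and_exists.mpr ⟨fun r hr => ?_, x k, ?_, ?_⟩
    · simp_all [P₁, P₂]
    · simp [P₂, hx]
    · simp [P₁, hx]
  exact Order.two_le_krullDim_of_lt_of_lt (a := ⟨⊥, Ideal.isPrime_bot⟩)
    (b := ⟨P₁, RingHom.ker_isPrime _⟩) (c := ⟨P₂, RingHom.ker_isPrime _⟩) h₀₁ h₁₂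

end KPlusXS

open KPlusXS in
/-- For a field `k`, `S = k[x,y]`, the subalgebra `R = k + xS` has Krull
dimension 2. -/
theorem stmt_4 (k : Type*) [Field k] :
    ringKrullDim
      (Algebra.adjoin k {f : MvPolynomial (Fin 2) k | ∃ n : ℕ, f = X 0 * X 1 ^ n}) = 2 :=
  le_antisymm ringKrullDim_le_two two_le_ringKrullDim
end

section
/- Let B be a polynomial ring over a field k, and R ⊆ B a subalgebra. Suppose g ∈ B is a monomial such that gⁿ ∉ R for all n ≥ 1, and let m₀ be a maximal ideal of R consisting of elements with zero constant term. Then gⁿ does not lie in the localization R_{m₀} (viewed inside Frac B) for any n ≥ 1. -/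
open MvPolynomial

/-- Let `B = k[x₁,…,x_r]`, `R ⊆ B` a subalgebra spanned by monomials and
constants, `m₀` the maximal ideal of `R` of elements with zero constant term, and
`g ∈ B` a monomial with `gⁿ ∉ R` for all `n ≥ 1`. Then `gⁿ` does not lie in the
localization `R_{m₀} ⊆ Frac B` for any `n ≥ 1`. -/
theorem stmt_12 (k : Type*) [Field k] (r : ℕ)
    (R : Subalgebra k (MvPolynomial (Fin r) k))
    (hmono : ∀ f ∈ R, ∀ d : Fin r →₀ ℕ, (monomial d (coeff d f) : MvPolynomial (Fin r) k) ∈ R)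
    (m₀ : Ideal R) (hm₀ : ∀ f : R, f ∈ m₀ ↔ coeff 0 (f : MvPolynomial (Fin r) k) = 0)
    (hmax : m₀.IsMaximal)
    (d : Fin r →₀ ℕ) (hd : d ≠ 0)
    (g : MvPolynomial (Fin r) k) (hg : g = monomial d (1 : k))
    (hgn : ∀ n : ℕ, 1 ≤ n → g ^ n ∉ R)
    (φ : MvPolynomial (Fin r) k → FractionRing (MvPolynomial (Fin r) k))
    (hφ : φ = algebraMap (MvPolynomial (Fin r) k) (FractionRing (MvPolynomial (Fin r) k))) :
    ∀ n : ℕ, 1 ≤ n →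
      φ g ^ n ∉ locSet (φ '' (R : Set (MvPolynomial (Fin r) k)))
        (φ '' (Subtype.val '' (m₀ : Set R))) := by
  intro n hn hmem
  obtain ⟨a, ⟨a₀, ha₀R, rfl⟩, b, ⟨b₀, hb₀R, rfl⟩, hbnot, heq⟩ := hmem
  subst hφ
  have hinj : Function.Injective
      (algebraMap (MvPolynomial (Fin r) k) (FractionRing (MvPolynomial (Fin r) k))) :=
    IsFractionRing.injective _ _
  -- b₀ has nonzero constant term
  have hc : coeff 0 b₀ ≠ 0 := by
    intro h
    exact hbnot ⟨b₀, ⟨⟨b₀, hb₀R⟩, (hm₀ ⟨b₀, hb₀R⟩).mpr h, rfl⟩, rfl⟩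
  have hb₀ne : b₀ ≠ 0 := fun h => hc (by simp [h])
  have hbne : algebraMap (MvPolynomial (Fin r) k) (FractionRing (MvPolynomial (Fin r) k)) b₀ ≠ 0 :=
    fun h => hb₀ne (hinj (by simpa using h))
  -- g ^ n * b₀ = a₀
  have key : g ^ n * b₀ = a₀ := by
    apply hinj
    rw [map_mul, map_pow, heq, div_mul_cancel₀ _ hbne]
  have hgpow : g ^ n = monomial (n • d) (1 : k) := by
    rw [hg, monomial_pow, one_pow]
  have hcoeff : coeff (n • d) a₀ = coeff 0 b₀ := by
    have h2 := coeff_monomial_mul 0 (n • d) (1 : k) b₀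
    rw [add_zero, one_mul] at h2
    rw [← key, hgpow, h2]
  have hmonR : (monomial (n • d) (coeff 0 b₀) : MvPolynomial (Fin r) k) ∈ R := by
    rw [← hcoeff]; exact hmono a₀ ha₀R (n • d)
  have : g ^ n ∈ R := by
    have := R.smul_mem hmonR (coeff 0 b₀)⁻¹
    simpa [smul_monomial, inv_mul_cancel₀ hc, hgpow] using this
  exact hgn n hn this
end
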